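/- arXiv:1401.0127 — 2 statements merged into one kernel-verified Lean document; each statement's English description precedes it below -/
import Mathlib

section
/- Let ε > 0, Δt > 0 with Δt < ε², and let A be the finite-difference Neumann Laplacian matrix (symmetric, nonpositive off-diagonal entries, zero row sums). Define the scheme U^{k+1} + Δt A U^{k+1} + (Δt/ε²) diag((U^k)²) U^{k+1} = U^k + (Δt/ε²) U^k (i.e., zero boundary flux α = 0), where (U^k)² denotes componentwise square. If −1 ≤ U^0 ≤ 1 componentwise, then −1 ≤ U^k ≤ 1 componentwise for all k ≥ 0. -/
/-!
Both bounds come from looking at an extremal node of the new iterate. At a maximum `i₀` of `w`, the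
row of `A` (nonpositive off the diagonal, zero row sum) gives `(A w)_{i₀} ≥ 0`, so with `d = Δt/ε²`
the scheme yields `(1 + d u_{i₀}²) w_{i₀} ≤ u_{i₀} + d u_{i₀}`, and
`1 + d u² - u - d u = (1 - u)(1 - d u) ≥ 0` for `|u| ≤ 1`, `0 ≤ d ≤ 1`. The scheme is odd in
`(u, w)`, which gives the lower bound.
-/

open Matrix

theorem Matrix.mulVec_apply_nonneg_of_forall_le {ι : Type*} [Fintype ι] {A : Matrix ι ι ℝ}
    (hAoff : ∀ i j, i ≠ j → A i j ≤ 0) (hArow : ∀ i, ∑ j, A i j = 0)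
    {v : ι → ℝ} {i₀ : ι} (hmax : ∀ j, v j ≤ v i₀) : 0 ≤ (A *ᵥ v) i₀ := by
  have hsplit : (A *ᵥ v) i₀ = ∑ j, A i₀ j * (v j - v i₀) := by
    simp only [mulVec, dotProduct, mul_sub, Finset.sum_sub_distrib, ← Finset.sum_mul, hArow,
      zero_mul, sub_zero]
  rw [hsplit]
  refine Finset.sum_nonneg fun j _ => ?_
  rcases eq_or_ne i₀ j with rfl | hne
  · simp
  · exact mul_nonneg_of_nonpos_of_nonpos (hAoff i₀ j hne) (sub_nonpos.mpr (hmax j))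

theorem le_one_of_allenCahn_step {d s u w : ℝ} (hd0 : 0 ≤ d) (hd1 : d ≤ 1) (hu : |u| ≤ 1)
    (hs : 0 ≤ s) (hstep : w + s + d * u ^ 2 * w = u + d * u) : w ≤ 1 := by
  obtain ⟨hu₁, hu₂⟩ := abs_le.mp hu
  have hdu : d * u ≤ 1 := by nlinarith
  have hfactor : 0 ≤ (1 - u) * (1 - d * u) := mul_nonneg (by linarith) (by linarith)
  have hpos : 0 < 1 + d * u ^ 2 := by positivity
  refine le_of_mul_le_mul_left ?_ hpos
  nlinarith

theorem le_one_of_allenCahn_scheme {ι : Type*} [Fintype ι] {d Δt : ℝ} (hd0 : 0 ≤ d) (hd1 : d ≤ 1)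
    (hΔt : 0 ≤ Δt) {A : Matrix ι ι ℝ} (hAoff : ∀ i j, i ≠ j → A i j ≤ 0)
    (hArow : ∀ i, ∑ j, A i j = 0) {u w : ι → ℝ} (hu : ∀ i, |u i| ≤ 1)
    (hstep : ∀ i, w i + Δt * (A *ᵥ w) i + d * u i ^ 2 * w i = u i + d * u i) (i : ι) :
    w i ≤ 1 := by
  have : Nonempty ι := ⟨i⟩
  obtain ⟨i₀, hmax⟩ := Finite.exists_max w
  have hflux : 0 ≤ Δt * (A *ᵥ w) i₀ := mul_nonneg hΔt (mulVec_apply_nonneg_of_forall_le hAoff hArow hmax)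
  exact (hmax i).trans (le_one_of_allenCahn_step hd0 hd1 (hu i₀) hflux (hstep i₀))

theorem abs_le_one_of_allenCahn_scheme {ι : Type*} [Fintype ι] {d Δt : ℝ} (hd0 : 0 ≤ d)
    (hd1 : d ≤ 1) (hΔt : 0 ≤ Δt) {A : Matrix ι ι ℝ} (hAoff : ∀ i j, i ≠ j → A i j ≤ 0)
    (hArow : ∀ i, ∑ j, A i j = 0) {u w : ι → ℝ} (hu : ∀ i, |u i| ≤ 1)
    (hstep : ∀ i, w i + Δt * (A *ᵥ w) i + d * u i ^ 2 * w i = u i + d * u i) (i : ι) :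
    |w i| ≤ 1 := by
  have hstep_neg : ∀ i, (-w) i + Δt * (A *ᵥ -w) i + d * (-u) i ^ 2 * (-w) i
      = (-u) i + d * (-u) i := fun i => by
    simp only [mulVec_neg, Pi.neg_apply, neg_sq]
    linarith [hstep i]
  have hu_neg : ∀ i, |(-u) i| ≤ 1 := fun i => by simpa using hu i
  refine abs_le.mpr ⟨?_, le_one_of_allenCahn_scheme hd0 hd1 hΔt hAoff hArow hu hstep i⟩
  have := le_one_of_allenCahn_scheme hd0 hd1 hΔt hAoff hArow hu_neg hstep_neg i
  simp only [Pi.neg_apply] at this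
  linarith

theorem stmt_5_general (n : ℕ) (ε Δt : ℝ) (hΔt : 0 < Δt) (hcfl : Δt < ε ^ 2)
    (A : Matrix (Fin n) (Fin n) ℝ)
    (hAoff : ∀ i j, i ≠ j → A i j ≤ 0)
    (hArow : ∀ i, ∑ j, A i j = 0)
    (U : ℕ → Fin n → ℝ)
    (hscheme : ∀ k i,
      U (k + 1) i + Δt * A.mulVec (U (k + 1)) i
        + (Δt / ε ^ 2) * (U k i) ^ 2 * U (k + 1) i
      = U k i + (Δt / ε ^ 2) * U k i)
    (hinit : ∀ i, -1 ≤ U 0 i ∧ U 0 i ≤ 1) :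
    ∀ k i, -1 ≤ U k i ∧ U k i ≤ 1 := by
  have hε2 : 0 < ε ^ 2 := hΔt.trans hcfl
  have hd0 : 0 ≤ Δt / ε ^ 2 := by positivity
  have hd1 : Δt / ε ^ 2 ≤ 1 := (div_le_one hε2).mpr hcfl.le
  suffices h : ∀ k i, |U k i| ≤ 1 from fun k i => abs_le.mp (h k i)
  intro k
  induction k with
  | zero => exact fun i => abs_le.mpr (hinit i)
  | succ k ih =>
    exact abs_le_one_of_allenCahn_scheme hd0 hd1 hΔt.le hAoff hArow ih (hscheme k)

/-- Discrete maximum principle for the linearized semi-implicit Euler scheme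
for the 1-D Allen–Cahn equation with zero boundary flux. -/
theorem stmt_5 (n : ℕ) (ε Δt : ℝ) (hε : 0 < ε) (hΔt : 0 < Δt) (hcfl : Δt < ε ^ 2)
    (A : Matrix (Fin n) (Fin n) ℝ) (hAsymm : A.IsSymm)
    (hAoff : ∀ i j, i ≠ j → A i j ≤ 0)
    (hArow : ∀ i, ∑ j, A i j = 0)
    (U : ℕ → Fin n → ℝ)
    (hscheme : ∀ k i,
      U (k + 1) i + Δt * A.mulVec (U (k + 1)) i
        + (Δt / ε ^ 2) * (U k i) ^ 2 * U (k + 1) i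
      = U k i + (Δt / ε ^ 2) * U k i)
    (hinit : ∀ i, -1 ≤ U 0 i ∧ U 0 i ≤ 1) :
    ∀ k i, -1 ≤ U k i ∧ U k i ≤ 1 :=
  stmt_5_general n ε Δt hΔt hcfl A hAoff hArow U hscheme hinit
end

section
/- Under the hypotheses of the Allen–Cahn semi-implicit scheme with α = 0 and Δt < ε², setting V = U^k − 1 (componentwise), the update satisfies the identity (I + (Δt/ε²) diag((V+1)²) + Δt A)(U^{k+1} − 1) = (1 − Δt/ε²) V − (Δt/ε²) V², where V² is the componentwise square. Moreover if V ≤ 0 componentwise then the right-hand side is ≤ 0 componentwise. -/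
/-!
Subtracting the constant vector `1` from both sides of the scheme costs nothing on the
Laplacian part because `A` annihilates constants (zero row sums); the rest is a scalar
identity in each component. For the sign, `V ≤ 0` and `0 ≤ Δt/ε² ≤ 1` make both
`(1 - Δt/ε²) V` and `-(Δt/ε²) V²` nonpositive.
-/

open Matrix

theorem Matrix.mulVec_const_eq_zero_of_rowSum_eq_zero {m n α : Type*} [Fintype n]
    [NonUnitalNonAssocSemiring α] {A : Matrix m n α} (hA : ∀ i, ∑ j, A i j = 0) (c : α) :
    A *ᵥ (fun _ => c) = 0 := by
  funext i
  simp only [mulVec, dotProduct, ← Finset.sum_mul, hA i, zero_mul, Pi.zero_apply]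

theorem Matrix.mulVec_sub_const_of_rowSum_eq_zero {m n α : Type*} [Fintype n]
    [NonUnitalNonAssocRing α] {A : Matrix m n α} (hA : ∀ i, ∑ j, A i j = 0)
    (w : n → α) (c : α) :
    A *ᵥ (fun j => w j - c) = A *ᵥ w := by
  rw [show (fun j => w j - c) = w - fun _ => c from rfl, mulVec_sub,
    mulVec_const_eq_zero_of_rowSum_eq_zero hA, sub_zero]

theorem semiImplicit_shift_identity {R : Type*} [CommRing R] {c v w d : R}
    (h : w + d + c * (v + 1) ^ 2 * w = (v + 1) + c * (v + 1)) :
    (w - 1) + c * (v + 1) ^ 2 * (w - 1) + d = (1 - c) * v - c * v ^ 2 := by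
  linear_combination h

theorem one_sub_mul_sub_mul_sq_nonpos {R : Type*} [Ring R] [LinearOrder R] [IsStrictOrderedRing R]
    {c v : R} (hc₀ : 0 ≤ c) (hc₁ : c ≤ 1) (hv : v ≤ 0) :
    (1 - c) * v - c * v ^ 2 ≤ 0 := by
  have h₁ : (1 - c) * v ≤ 0 := mul_nonpos_of_nonneg_of_nonpos (sub_nonneg.2 hc₁) hv
  have h₂ : 0 ≤ c * v ^ 2 := mul_nonneg hc₀ (sq_nonneg v)
  exact sub_nonpos.2 (h₁.trans h₂)

theorem stmt_6_general (n : ℕ) (ε Δt : ℝ) (hΔt : 0 < Δt) (hcfl : Δt < ε ^ 2)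
    (A : Matrix (Fin n) (Fin n) ℝ)
    (hArow : ∀ i, ∑ j, A i j = 0)
    (U W : Fin n → ℝ)
    (hscheme : ∀ i,
      W i + Δt * A.mulVec W i + (Δt / ε ^ 2) * (U i) ^ 2 * W i
        = U i + (Δt / ε ^ 2) * U i)
    (V : Fin n → ℝ) (hV : ∀ i, V i = U i - 1) :
    (((1 : Matrix (Fin n) (Fin n) ℝ)
        + (Δt / ε ^ 2) • Matrix.diagonal (fun i => (V i + 1) ^ 2)
        + Δt • A).mulVec (fun i => W i - 1)
      = fun i => (1 - Δt / ε ^ 2) * V i - (Δt / ε ^ 2) * (V i) ^ 2) ∧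
    ((∀ i, V i ≤ 0) →
      ∀ i, (1 - Δt / ε ^ 2) * V i - (Δt / ε ^ 2) * (V i) ^ 2 ≤ 0) := by
  have hε₂ : 0 < ε ^ 2 := hΔt.trans hcfl
  refine ⟨funext fun i => ?_, fun hVnonpos i =>
    one_sub_mul_sub_mul_sq_nonpos (div_pos hΔt hε₂).le ((div_le_one hε₂).2 hcfl.le) (hVnonpos i)⟩
  simp only [add_mulVec, one_mulVec, smul_mulVec, mulVec_diagonal,
    mulVec_sub_const_of_rowSum_eq_zero hArow, Pi.add_apply, Pi.smul_apply, smul_eq_mul,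
    ← mul_assoc]
  have hU : U i = V i + 1 := by rw [hV i, sub_add_cancel]
  exact semiImplicit_shift_identity (by rw [← hU]; linear_combination hscheme i)

/-- Key algebraic identity in the proof of the discrete maximum principle for the
semi-implicit Allen–Cahn scheme, for the shifted variable `V = U^k − 1`. -/
theorem stmt_6 (n : ℕ) (ε Δt : ℝ) (hε : 0 < ε) (hΔt : 0 < Δt) (hcfl : Δt < ε ^ 2)
    (A : Matrix (Fin n) (Fin n) ℝ) (hAsymm : A.IsSymm)
    (hAoff : ∀ i j, i ≠ j → A i j ≤ 0)
    (hArow : ∀ i, ∑ j, A i j = 0)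
    (U W : Fin n → ℝ)
    (hscheme : ∀ i,
      W i + Δt * A.mulVec W i + (Δt / ε ^ 2) * (U i) ^ 2 * W i
        = U i + (Δt / ε ^ 2) * U i)
    (V : Fin n → ℝ) (hV : ∀ i, V i = U i - 1) :
    (((1 : Matrix (Fin n) (Fin n) ℝ)
        + (Δt / ε ^ 2) • Matrix.diagonal (fun i => (V i + 1) ^ 2)
        + Δt • A).mulVec (fun i => W i - 1)
      = fun i => (1 - Δt / ε ^ 2) * V i - (Δt / ε ^ 2) * (V i) ^ 2) ∧
    ((∀ i, V i ≤ 0) →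
      ∀ i, (1 - Δt / ε ^ 2) * V i - (Δt / ε ^ 2) * (V i) ^ 2 ≤ 0) :=
  stmt_6_general n ε Δt hΔt hcfl A hArow U W hscheme V hV
end
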